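/- arXiv:2402.05841 — 2 statements merged into one kernel-verified Lean document; each statement's English description precedes it below -/
import Mathlib

section
/- Let c > 0, a > 0, and x ∈ (0,1). Then the following interchange of derivatives holds: ∂/∂x [ Ĩ_x(a, c) ] = ∂/∂a [ x^{a−1}(1−x)^{c−1} / B(a,c) ], i.e., the x-derivative of the a-derivative of the regularized incomplete beta function I_x(a,c) equals the a-derivative of the beta density x^{a−1}(1−x)^{c−1}/B(a,c); in particular, both derivatives exist. -/
/-!
Differentiating under the integral sign, with the logarithm absorbed by lowering the exponent
of the dominating beta kernel, gives
`∂ₐ I_x(a,c) = (J(x) B(a,c) - B(x;a,c) J(1)) / B(a,c)²` with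
`J(x) = ∫_0^x s^{a-1} log s (1-s)^{c-1} ds` (`incBetaLog`).
By the fundamental theorem of calculus its `x`-derivative is
`(x^{a-1} log x (1-x)^{c-1} B(a,c) - x^{a-1}(1-x)^{c-1} J(1)) / B(a,c)²`,
which is the quotient-rule derivative in `a` of `x^{a-1}(1-x)^{c-1} / B(a,c)`.
-/

/-- The incomplete beta function `B(x; a, c) = ∫_0^x s^{a-1}(1-s)^{c-1} ds`. -/
noncomputable def incBeta (x a c : ℝ) : ℝ := ∫ s in (0:ℝ)..x, s ^ (a - 1) * (1 - s) ^ (c - 1)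

/-- The regularized incomplete beta function `I_x(a, c) = B(x; a, c) / B(a, c)`. -/
noncomputable def regIncBeta (x a c : ℝ) : ℝ := incBeta x a c / incBeta 1 a c

open Real MeasureTheory Set Filter Topology intervalIntegral

noncomputable def incBetaLog (x a c : ℝ) : ℝ :=
  ∫ s in (0:ℝ)..x, s ^ (a - 1) * log s * (1 - s) ^ (c - 1)

lemma uIcc_zero_subset_of_mem_Icc {x : ℝ} (hx : x ∈ Icc 0 1) : uIcc 0 x ⊆ uIcc 0 1 :=
  uIcc_subset_uIcc left_mem_uIcc (by rwa [uIcc_of_le zero_le_one])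

lemma uIoc_zero_subset_Ioc {x : ℝ} (hx : x ∈ Icc 0 1) : uIoc 0 x ⊆ Ioc 0 1 := by
  rw [uIoc_of_le hx.1]
  exact Ioc_subset_Ioc_right hx.2

lemma intervalIntegrable_rpow_mul_one_sub_rpow {p q x : ℝ} (hp : -1 < p) (hq : -1 < q)
    (hx : x ∈ Icc 0 1) :
    IntervalIntegrable (fun s : ℝ => s ^ p * (1 - s) ^ q) volume 0 x := by
  -- on `(0, 1)` the integrand is the norm of Mathlib's complex beta integrand
  have hbeta := (Complex.betaIntegral_convergent (u := p + 1) (v := q + 1)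
    (by simp only [Complex.add_re, Complex.ofReal_re, Complex.one_re]; linarith)
    (by simp only [Complex.add_re, Complex.ofReal_re, Complex.one_re]; linarith)).norm
  refine IntervalIntegrable.mono_set ?_ (uIcc_zero_subset_of_mem_Icc hx)
  rw [intervalIntegrable_iff_integrableOn_Ioo_of_le zero_le_one] at hbeta ⊢
  refine hbeta.congr_fun (fun s hs => ?_) measurableSet_Ioo
  simp only [add_sub_cancel_right, norm_mul]
  rw [← Complex.ofReal_one, ← Complex.ofReal_sub, Complex.norm_cpow_eq_rpow_re_of_pos hs.1,
    Complex.norm_cpow_eq_rpow_re_of_pos (sub_pos.2 hs.2)]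
  simp

lemma rpow_mul_abs_log_le {s p r ε : ℝ} (hs₀ : 0 < s) (hs₁ : s ≤ 1) (hε : 0 < ε)
    (hpr : p + ε ≤ r) : s ^ r * |log s| ≤ ε⁻¹ * s ^ p :=
  calc s ^ r * |log s| ≤ s ^ (p + ε) * |log s| :=
        mul_le_mul_of_nonneg_right (rpow_le_rpow_of_exponent_ge hs₀ hs₁ hpr) (abs_nonneg _)
    _ = s ^ p * |log s * s ^ ε| := by
        rw [rpow_add hs₀, abs_mul, abs_of_pos (rpow_pos_of_pos hs₀ ε)]
        ring
    _ ≤ s ^ p * ε⁻¹ := by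
        gcongr
        simpa using (abs_log_mul_self_rpow_lt s ε hs₀ hs₁ hε).le
    _ = ε⁻¹ * s ^ p := mul_comm _ _

lemma norm_rpow_mul_log_mul_one_sub_rpow_le {s p q r ε : ℝ} (hs : s ∈ Ioc 0 1) (hε : 0 < ε)
    (hpr : p + ε ≤ r) :
    ‖s ^ r * log s * (1 - s) ^ q‖ ≤ ε⁻¹ * (s ^ p * (1 - s) ^ q) := by
  have h1s : 0 ≤ 1 - s := sub_nonneg.2 hs.2
  rw [norm_mul, norm_mul, norm_of_nonneg (rpow_nonneg hs.1.le r),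
    norm_of_nonneg (rpow_nonneg h1s q), norm_eq_abs, ← mul_assoc]
  exact mul_le_mul_of_nonneg_right (rpow_mul_abs_log_le hs.1 hs.2 hε hpr) (rpow_nonneg h1s q)

lemma intervalIntegrable_rpow_mul_log_mul_one_sub_rpow {p q x : ℝ} (hp : -1 < p) (hq : -1 < q)
    (hx : x ∈ Icc 0 1) :
    IntervalIntegrable (fun s : ℝ => s ^ p * log s * (1 - s) ^ q) volume 0 x := by
  have hε : 0 < (p + 1) / 2 := by linarith
  refine ((intervalIntegrable_rpow_mul_one_sub_rpow (p := p - (p + 1) / 2) (by linarith) hq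
    hx).const_mul ((p + 1) / 2)⁻¹).mono_fun' (by fun_prop) ?_
  rw [EventuallyLE, ae_restrict_iff' measurableSet_uIoc]
  exact ae_of_all _ fun s hs =>
    norm_rpow_mul_log_mul_one_sub_rpow_le (uIoc_zero_subset_Ioc hx hs) hε (by linarith)

lemma continuousOn_rpow_mul_one_sub_rpow (p q : ℝ) :
    ContinuousOn (fun s : ℝ => s ^ p * (1 - s) ^ q) (Ioo 0 1) := by
  intro s hs
  have h0 : s ≠ 0 := hs.1.ne'
  have h1 : 1 - s ≠ 0 := (sub_pos.2 hs.2).ne'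
  apply ContinuousAt.continuousWithinAt
  fun_prop (disch := first | exact Or.inl h0 | exact Or.inl h1)

lemma continuousOn_rpow_mul_log_mul_one_sub_rpow (p q : ℝ) :
    ContinuousOn (fun s : ℝ => s ^ p * log s * (1 - s) ^ q) (Ioo 0 1) := by
  intro s hs
  have h0 : s ≠ 0 := hs.1.ne'
  have h1 : 1 - s ≠ 0 := (sub_pos.2 hs.2).ne'
  apply ContinuousAt.continuousWithinAt
  fun_prop (disch := first | assumption | exact Or.inl h0 | exact Or.inl h1)

lemma hasDerivAt_rpow_sub_one_param {s : ℝ} (hs : 0 < s) (a : ℝ) :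
    HasDerivAt (fun a' : ℝ => s ^ (a' - 1)) (s ^ (a - 1) * log s) a := by
  simpa [mul_comm] using ((hasDerivAt_id a).sub_const 1).const_rpow hs

lemma hasDerivAt_integral_right_of_continuousOn {f : ℝ → ℝ} {U : Set ℝ} {a x : ℝ}
    (hU : IsOpen U) (hf : ContinuousOn f U) (hx : x ∈ U) (hint : IntervalIntegrable f volume a x) :
    HasDerivAt (fun u => ∫ s in a..u, f s) (f x) x :=
  integral_hasDerivAt_right hint (hf.stronglyMeasurableAtFilter hU x hx)
    (hf.continuousAt (hU.mem_nhds hx))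

section IncBeta

variable {a c x : ℝ}

lemma incBeta_one_pos (ha : 0 < a) (hc : 0 < c) : 0 < incBeta 1 a c :=
  intervalIntegral_pos_of_pos_on
    (intervalIntegrable_rpow_mul_one_sub_rpow (by linarith) (by linarith)
      (right_mem_Icc.2 zero_le_one))
    (fun s hs => mul_pos (rpow_pos_of_pos hs.1 _) (rpow_pos_of_pos (sub_pos.2 hs.2) _)) one_pos

lemma hasDerivAt_incBeta_param (ha : 0 < a) (hc : 0 < c) (hx : x ∈ Icc 0 1) :
    HasDerivAt (fun a' => incBeta x a' c) (incBetaLog x a c) a := by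
  have hε : 0 < a / 4 := by positivity
  -- for `a'` within `a/4` of `a`, the kernel with exponent `a/2 - 1` dominates the derivative
  refine (hasDerivAt_integral_of_dominated_loc_of_deriv_le
    (F := fun a' s => s ^ (a' - 1) * (1 - s) ^ (c - 1))
    (F' := fun a' s => s ^ (a' - 1) * log s * (1 - s) ^ (c - 1)) (Metric.ball_mem_nhds a hε)
    (.of_forall fun _ => by fun_prop)
    (intervalIntegrable_rpow_mul_one_sub_rpow (by linarith) (by linarith) hx) (by fun_prop)
    (bound := fun s => (a / 4)⁻¹ * (s ^ (a / 2 - 1) * (1 - s) ^ (c - 1))) ?_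
    ((intervalIntegrable_rpow_mul_one_sub_rpow (by linarith) (by linarith) hx).const_mul _)
    ?_).2
  · refine ae_of_all _ fun s hs a' ha' =>
      norm_rpow_mul_log_mul_one_sub_rpow_le (uIoc_zero_subset_Ioc hx hs) hε ?_
    have := (abs_lt.1 (Metric.mem_ball.1 ha')).1
    linarith
  · exact ae_of_all _ fun s hs a' _ =>
      (hasDerivAt_rpow_sub_one_param (uIoc_zero_subset_Ioc hx hs).1 a').mul_const _

lemma hasDerivAt_regIncBeta_param (ha : 0 < a) (hc : 0 < c) (hx : x ∈ Icc 0 1) :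
    HasDerivAt (fun a' => regIncBeta x a' c)
      ((incBetaLog x a c * incBeta 1 a c - incBeta x a c * incBetaLog 1 a c) / incBeta 1 a c ^ 2)
      a :=
  (hasDerivAt_incBeta_param ha hc hx).div
    (hasDerivAt_incBeta_param ha hc (right_mem_Icc.2 zero_le_one)) (incBeta_one_pos ha hc).ne'

lemma hasDerivAt_incBeta_right (ha : 0 < a) (hc : 0 < c) (hx : x ∈ Ioo 0 1) :
    HasDerivAt (fun x' => incBeta x' a c) (x ^ (a - 1) * (1 - x) ^ (c - 1)) x :=
  hasDerivAt_integral_right_of_continuousOn isOpen_Ioo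
    (continuousOn_rpow_mul_one_sub_rpow _ _) hx
    (intervalIntegrable_rpow_mul_one_sub_rpow (by linarith) (by linarith) (Ioo_subset_Icc_self hx))

lemma hasDerivAt_incBetaLog_right (ha : 0 < a) (hc : 0 < c) (hx : x ∈ Ioo 0 1) :
    HasDerivAt (fun x' => incBetaLog x' a c) (x ^ (a - 1) * log x * (1 - x) ^ (c - 1)) x :=
  hasDerivAt_integral_right_of_continuousOn isOpen_Ioo
    (continuousOn_rpow_mul_log_mul_one_sub_rpow _ _) hx
    (intervalIntegrable_rpow_mul_log_mul_one_sub_rpow (by linarith) (by linarith)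
      (Ioo_subset_Icc_self hx))

end IncBeta

/-- The interchange of derivatives
`∂/∂x [ Ĩ_x(a,c) ] = ∂/∂a [ x^{a-1}(1-x)^{c-1} / B(a,c) ]`, where
`Ĩ_x(a,c) = ∂I_x(a,c)/∂a`; in particular both derivatives exist (witnessed by
a common value `D`). -/
theorem deriv_swap_regIncBeta (c a x : ℝ) (hc : 0 < c) (ha : 0 < a)
    (hx0 : 0 < x) (hx1 : x < 1) :
    ∃ D : ℝ,
      HasDerivAt (fun a' : ℝ => x ^ (a' - 1) * (1 - x) ^ (c - 1) / incBeta 1 a' c) D a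
      ∧ HasDerivAt (fun x' : ℝ => deriv (fun a' : ℝ => regIncBeta x' a' c) a) D x := by
  have hx : x ∈ Ioo 0 1 := ⟨hx0, hx1⟩
  set B := incBeta 1 a c
  refine ⟨(x ^ (a - 1) * log x * (1 - x) ^ (c - 1) * B
    - x ^ (a - 1) * (1 - x) ^ (c - 1) * incBetaLog 1 a c) / B ^ 2, ?_, ?_⟩
  · exact ((hasDerivAt_rpow_sub_one_param hx0 a).mul_const _).div
      (hasDerivAt_incBeta_param ha hc (right_mem_Icc.2 zero_le_one)) (incBeta_one_pos ha hc).ne'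
  · have hderiv : (fun x' => deriv (fun a' => regIncBeta x' a' c) a) =ᶠ[𝓝 x]
        fun x' => (incBetaLog x' a c * B - incBeta x' a c * incBetaLog 1 a c) / B ^ 2 := by
      filter_upwards [isOpen_Ioo.mem_nhds hx] with x' hx'
      exact (hasDerivAt_regIncBeta_param ha hc (Ioo_subset_Icc_self hx')).deriv
    exact ((((hasDerivAt_incBetaLog_right ha hc hx).mul_const B).sub
      ((hasDerivAt_incBeta_right ha hc hx).mul_const _)).div_const _).congr_of_eventuallyEq hderiv
end

section
/- Let K ≥ 2, let t > 0, and let x ∈ ℝ^K with x_i > 0 for all i. Let D be the K×K diagonal matrix with entries D_{ii} = t/x_i, let 𝟙 ∈ ℝ^K be the all-ones vector, and let P = I − (1/K)·𝟙𝟙ᵀ be the orthogonal projection onto the hyperplane {v : 𝟙ᵀv = 0}. Then for every s ∈ ℝ^K with 𝟙ᵀ s = 0, there exists a unique p ∈ ℝ^K such that P·D·p = s and 𝟙ᵀ p = 1. -/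
/-! Since `P` subtracts the mean, `P (D p) = s` with `𝟙ᵀs = 0` says exactly that `D p = s + c𝟙`
for some constant `c`, i.e. `p_i = (s_i + c) / d_i` with `d_i = t / x_i > 0`. The constraint
`𝟙ᵀp = 1` is then affine in `c` with slope `∑ 1 / d_i > 0`, so it determines `c`, hence `p`. -/

open Matrix

section

variable {ι : Type*} [Fintype ι]

theorem one_sub_smul_of_one_mulVec [DecidableEq ι] (a : ℝ) (v : ι → ℝ) :
    (1 - a • Matrix.of (fun _ _ : ι => (1 : ℝ))) *ᵥ v = fun i => v i - a * ∑ j, v j := by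
  ext i
  simp [mulVec, dotProduct, one_apply, sub_mul, Finset.sum_sub_distrib, Finset.mul_sum]

theorem one_sub_smul_of_one_mulVec_eq_iff [DecidableEq ι] {a : ℝ} (ha : a * Fintype.card ι = 1)
    {s : ι → ℝ} (hs : ∑ i, s i = 0) (v : ι → ℝ) :
    (1 - a • Matrix.of (fun _ _ : ι => (1 : ℝ))) *ᵥ v = s ↔ ∃ c, ∀ i, v i = s i + c := by
  rw [one_sub_smul_of_one_mulVec, funext_iff]
  constructor
  · exact fun h => ⟨a * ∑ j, v j, fun i => by linarith [h i]⟩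
  · rintro ⟨c, hc⟩ i
    have hsum : ∑ j, v j = Fintype.card ι * c := by
      simp [hc, Finset.sum_add_distrib, hs]
    rw [hsum, ← mul_assoc, ha, hc]
    ring

theorem sum_add_const_div (s d : ι → ℝ) (c : ℝ) :
    ∑ i, (s i + c) / d i = ∑ i, s i / d i + c * ∑ i, 1 / d i := by
  simp only [add_div, Finset.sum_add_distrib, Finset.mul_sum, mul_one_div]

theorem existsUnique_mul_eq_add_const_and_sum_eq_one [Nonempty ι] {d : ι → ℝ}
    (hd : ∀ i, 0 < d i) (s : ι → ℝ) :
    ∃! p : ι → ℝ, (∃ c, ∀ i, d i * p i = s i + c) ∧ ∑ i, p i = 1 := by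
  have hw : 0 < ∑ i, 1 / d i :=
    Finset.sum_pos (fun i _ => one_div_pos.mpr (hd i)) Finset.univ_nonempty
  have hp : ∀ {p : ι → ℝ} {c : ℝ}, (∀ i, d i * p i = s i + c) → p = fun i => (s i + c) / d i :=
    fun h => funext fun i => by rw [← h i, mul_div_cancel_left₀ _ (hd i).ne']
  set c₀ := (1 - ∑ i, s i / d i) / ∑ i, 1 / d i
  refine ⟨fun i => (s i + c₀) / d i, ⟨⟨c₀, fun i => mul_div_cancel₀ _ (hd i).ne'⟩, ?_⟩, ?_⟩
  · rw [sum_add_const_div, div_mul_cancel₀ _ hw.ne']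
    ring
  · rintro q ⟨⟨c, hc⟩, hq⟩
    rw [hp hc, sum_add_const_div] at hq
    have hc₀ : c = c₀ := by
      rw [eq_div_iff hw.ne']
      linarith
    rw [hp hc, hc₀]

end

/-- With `D` the diagonal matrix `D_{ii} = t / x_i` and
`P = I - (1/K)·𝟙𝟙ᵀ` the orthogonal projection onto `{v : 𝟙ᵀv = 0}`, for every `s` with
`𝟙ᵀs = 0` there is a unique `p` with `P·D·p = s` and `𝟙ᵀp = 1`. -/
theorem classifier_guidance_linear_system (K : ℕ) (hK : 2 ≤ K)
    (t : ℝ) (ht : 0 < t) (x : Fin K → ℝ) (hx : ∀ i, 0 < x i)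
    (s : Fin K → ℝ) (hs : ∑ i, s i = 0) :
    ∃! p : Fin K → ℝ,
      (((1 : Matrix (Fin K) (Fin K) ℝ) - ((K : ℝ))⁻¹ • Matrix.of (fun _ _ => (1 : ℝ))) *
          Matrix.diagonal (fun i => t / x i)).mulVec p = s
      ∧ ∑ i, p i = 1 := by
  have : Nonempty (Fin K) := ⟨⟨0, by omega⟩⟩
  have hK' : (K : ℝ)⁻¹ * Fintype.card (Fin K) = 1 := by
    rw [Fintype.card_fin, inv_mul_cancel₀ (by positivity)]
  simp only [← mulVec_mulVec, one_sub_smul_of_one_mulVec_eq_iff hK' hs, mulVec_diagonal]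
  exact existsUnique_mul_eq_add_const_and_sum_eq_one (fun i => div_pos ht (hx i)) s
end
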